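/- arXiv:2506.05434 — 2 statements merged into one kernel-verified Lean document; each statement's English description precedes it below -/
import Mathlib

section
/- Let Z_1,...,Z_m be i.i.d. Bernoulli(p) random variables and let S = Z_1 + ... + Z_m. Define p⁺ = max{ q ∈ [0,1] : F_{m,q}(S) ≥ δ }, where F_{m,q} is the CDF of Binomial(m,q). Then P(p ≤ p⁺) ≥ 1 - δ. -/
open MeasureTheory ProbabilityTheory

/-- CDF of the Binomial(m, q) distribution evaluated at `k`. -/
noncomputable def binomCDF (m : ℕ) (q : ℝ) (k : ℕ) : ℝ :=
  ∑ j ∈ Finset.range (k + 1), (m.choose j : ℝ) * q ^ j * (1 - q) ^ (m - j)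

/-!
Let `G k = P(S ≤ k)`; for a sum of `m` independent Bernoulli(`p`) variables this is the binomial
CDF `F_{m,p}(k)`. If `p⁺ < p`, then `p` itself violates the condition defining `p⁺`, so
`G(S) < δ`. For any `ℕ`-valued `S` and any `ε`, `P(G(S) < ε) ≤ ε`: the set `{k | G k < ε}` is an
initial segment `{k | k < k₀}` of `ℕ`, and `P(S < k₀) = G(k₀ - 1) < ε`; if it is all of `ℕ`,
then `P(Ω) = sup G ≤ ε`.
-/

open Finset Filter

lemma binomCDF_nonneg {m : ℕ} {q : ℝ} (hq : q ∈ Set.Icc (0 : ℝ) 1) (k : ℕ) :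
    0 ≤ binomCDF m q k :=
  sum_nonneg fun j _ => by have := hq.1; have := sub_nonneg.mpr hq.2; positivity

lemma measure_cdf_comp_lt_le {Ω : Type*} [MeasurableSpace Ω] (μ : Measure Ω) (S : Ω → ℕ)
    (ε : ENNReal) : μ {ω | μ {ω' | S ω' ≤ S ω} < ε} ≤ ε := by
  have hcdf_mono : Monotone fun k => {ω' | S ω' ≤ k} := fun a b hab ω' h => le_trans h hab
  by_cases h : ∃ k, ε ≤ μ {ω' | S ω' ≤ k}
  · classical
    have hsub : {ω | μ {ω' | S ω' ≤ S ω} < ε} ⊆ {ω | S ω < Nat.find h} := fun ω hω => by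
      by_contra hge
      exact (Nat.find_spec h).not_gt (hω.trans_le' (measure_mono (hcdf_mono (not_lt.mp hge))))
    refine (measure_mono hsub).trans ?_
    rcases hk : Nat.find h with _ | n
    · simp
    · have hn : μ {ω' | S ω' ≤ n} < ε := not_le.mp (Nat.find_min h (by omega))
      simpa only [Nat.lt_succ_iff] using hn.le
  · push Not at h
    have hunion : (⋃ k, {ω' | S ω' ≤ k}) = Set.univ :=
      Set.iUnion_eq_univ_iff.mpr fun ω => ⟨S ω, le_refl (S ω)⟩
    calc μ {ω | μ {ω' | S ω' ≤ S ω} < ε} ≤ μ (⋃ k, {ω' | S ω' ≤ k}) :=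
          measure_mono (hunion ▸ Set.subset_univ _)
      _ ≤ ε := le_of_tendsto' (tendsto_measure_iUnion_atTop hcdf_mono) fun k => (h k).le

section ZeroOne

variable {ι : Type*} [Fintype ι] {x : ι → ℕ}

lemma sum_eq_card_filter_eq_one (hx : ∀ i, x i ≤ 1) : ∑ i, x i = #{i | x i = 1} := by
  rw [card_filter]
  refine sum_congr rfl fun i _ => ?_
  have := hx i
  split_ifs <;> omega

lemma filter_eq_one_eq_iff [DecidableEq ι] (hx : ∀ i, x i ≤ 1) (s : Finset ι) :
    ({i | x i = 1} : Finset ι) = s ↔ ∀ i, x i = if i ∈ s then 1 else 0 := by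
  simp only [Finset.ext_iff, mem_filter, mem_univ, true_and]
  refine forall_congr' fun i => ?_
  rcases Nat.le_one_iff_eq_zero_or_eq_one.mp (hx i) with h | h <;>
    by_cases hi : i ∈ s <;> simp [h, hi]

end ZeroOne

section Bernoulli

variable {Ω ι : Type*} [MeasurableSpace Ω] {μ : Measure Ω} [IsProbabilityMeasure μ] {p : ℝ}

lemma measure_eq_zero_eq_ofReal_one_sub {X : Ω → ℕ} (hX : Measurable X) (hval : ∀ ω, X ω ≤ 1)
    (hp : 0 ≤ p) (hbern : μ {ω | X ω = 1} = ENNReal.ofReal p) :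
    μ {ω | X ω = 0} = ENNReal.ofReal (1 - p) := by
  have hcompl : {ω | X ω = 0} = {ω | X ω = 1}ᶜ := by
    ext ω
    have := hval ω
    simp only [Set.mem_ofPred_eq, Set.mem_compl_iff]
    omega
  rw [hcompl, prob_compl_eq_one_sub (s := {ω | X ω = 1}) (hX (measurableSet_singleton 1)),
    hbern, ENNReal.ofReal_sub _ hp, ENNReal.ofReal_one]

variable [Fintype ι] [DecidableEq ι] {Z : ι → Ω → ℕ}

lemma measure_forall_eq_ite (hmeas : ∀ i, Measurable (Z i)) (hval : ∀ i ω, Z i ω ≤ 1)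
    (hp : 0 ≤ p) (hbern : ∀ i, μ {ω | Z i ω = 1} = ENNReal.ofReal p) (hindep : iIndepFun Z μ)
    (s : Finset ι) :
    μ {ω | ∀ i, Z i ω = if i ∈ s then 1 else 0} =
      ENNReal.ofReal p ^ #s * ENNReal.ofReal (1 - p) ^ (Fintype.card ι - #s) := by
  have hinter : {ω | ∀ i, Z i ω = if i ∈ s then 1 else 0} =
      ⋂ i, Z i ⁻¹' {if i ∈ s then 1 else 0} := by
    ext ω; simp
  rw [hinter, hindep.meas_iInter fun i => ⟨_, measurableSet_singleton _, rfl⟩]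
  have hfactor (i : ι) : μ (Z i ⁻¹' {if i ∈ s then 1 else 0}) =
      if i ∈ s then ENNReal.ofReal p else ENNReal.ofReal (1 - p) := by
    split_ifs
    · exact hbern i
    · exact measure_eq_zero_eq_ofReal_one_sub (hmeas i) (hval i) hp (hbern i)
  rw [prod_congr rfl fun i _ => hfactor i, prod_ite, prod_const, prod_const,
    filter_mem_eq_inter, univ_inter, filter_not, filter_mem_eq_inter, univ_inter,
    sdiff_eq_inter_compl, univ_inter, card_compl]

lemma measure_sum_eq_choose_mul (hmeas : ∀ i, Measurable (Z i)) (hval : ∀ i ω, Z i ω ≤ 1)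
    (hp : 0 ≤ p) (hbern : ∀ i, μ {ω | Z i ω = 1} = ENNReal.ofReal p) (hindep : iIndepFun Z μ)
    (k : ℕ) :
    μ {ω | ∑ i, Z i ω = k} = (Fintype.card ι).choose k * ENNReal.ofReal p ^ k *
      ENNReal.ofReal (1 - p) ^ (Fintype.card ι - k) := by
  set ones : Ω → Finset ι := fun ω => {i | Z i ω = 1}
  have hfiber (s : Finset ι) :
      ones ⁻¹' {s} = {ω | ∀ i, Z i ω = if i ∈ s then 1 else 0} := by
    ext ω
    exact filter_eq_one_eq_iff (fun i => hval i ω) s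
  have hfiber_meas (s : Finset ι) : MeasurableSet (ones ⁻¹' {s}) := by
    rw [hfiber]
    simp only [Set.ofPred_forall]
    exact .iInter fun i => hmeas i (measurableSet_singleton _)
  have hevent : {ω | ∑ i, Z i ω = k} = ones ⁻¹' ↑(powersetCard k (univ : Finset ι)) := by
    ext ω
    simp [ones, sum_eq_card_filter_eq_one fun i => hval i ω]
  have hatom (s) (hs : s ∈ powersetCard k (univ : Finset ι)) : μ (ones ⁻¹' {s}) =
      ENNReal.ofReal p ^ k * ENNReal.ofReal (1 - p) ^ (Fintype.card ι - k) := by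
    rw [hfiber, measure_forall_eq_ite hmeas hval hp hbern hindep, (mem_powersetCard.mp hs).2]
  rw [hevent, ← sum_measure_preimage_singleton _ fun s _ => hfiber_meas s, sum_congr rfl hatom,
    sum_const, card_powersetCard, card_univ, nsmul_eq_mul, mul_assoc]

lemma measure_sum_le_eq_ofReal_binomCDF (hmeas : ∀ i, Measurable (Z i))
    (hval : ∀ i ω, Z i ω ≤ 1) (hp : p ∈ Set.Icc (0 : ℝ) 1)
    (hbern : ∀ i, μ {ω | Z i ω = 1} = ENNReal.ofReal p) (hindep : iIndepFun Z μ) (j : ℕ) :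
    μ {ω | ∑ i, Z i ω ≤ j} = ENNReal.ofReal (binomCDF (Fintype.card ι) p j) := by
  have hevent : {ω | ∑ i, Z i ω ≤ j} = (fun ω => ∑ i, Z i ω) ⁻¹' ↑(range (j + 1)) := by
    ext ω
    simp
  have hsum_meas : Measurable fun ω => ∑ i, Z i ω := measurable_sum _ fun i _ => hmeas i
  obtain ⟨hp0, hp1⟩ := hp
  have h1p : 0 ≤ 1 - p := sub_nonneg.mpr hp1
  rw [hevent,
    ← sum_measure_preimage_singleton _ fun k _ => hsum_meas (measurableSet_singleton k), binomCDF,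
    ENNReal.ofReal_sum_of_nonneg fun k _ => by positivity]
  refine sum_congr rfl fun k _ => ?_
  change μ {ω | ∑ i, Z i ω = k} = _
  rw [measure_sum_eq_choose_mul hmeas hval hp0 hbern hindep, ENNReal.ofReal_mul (by positivity),
    ENNReal.ofReal_mul (by positivity), ENNReal.ofReal_natCast, ENNReal.ofReal_pow hp0,
    ENNReal.ofReal_pow h1p]

end Bernoulli

theorem stmt_11_general {Ω : Type*} [MeasurableSpace Ω]
    (μ : Measure Ω) [IsProbabilityMeasure μ]
    (m : ℕ) (p δ : ℝ) (hp : p ∈ Set.Icc (0:ℝ) 1)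
    (Z : Fin m → Ω → ℕ)
    (hmeas : ∀ i, Measurable (Z i))
    (hval : ∀ i ω, Z i ω ≤ 1)
    (hbern : ∀ i, μ {ω | Z i ω = 1} = ENNReal.ofReal p)
    (hindep : iIndepFun Z μ)
    (S : Ω → ℕ) (hS : ∀ ω, S ω = ∑ i, Z i ω)
    (pPlus : Ω → ℝ)
    (hpPlus : ∀ ω, pPlus ω = sSup {q | q ∈ Set.Icc (0:ℝ) 1 ∧ δ ≤ binomCDF m q (S ω)}) :
    μ {ω | p ≤ pPlus ω} ≥ 1 - ENNReal.ofReal δ := by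
  have hcdf (j : ℕ) : μ {ω | S ω ≤ j} = ENNReal.ofReal (binomCDF m p j) := by
    simpa only [hS, Fintype.card_fin] using
      measure_sum_le_eq_ofReal_binomCDF hmeas hval hp hbern hindep j
  have hmiss : {ω | p ≤ pPlus ω}ᶜ ⊆ {ω | μ {ω' | S ω' ≤ S ω} < ENNReal.ofReal δ} := by
    intro ω hω
    have hδ : binomCDF m p (S ω) < δ := by
      by_contra! hge
      refine hω (show p ≤ pPlus ω from ?_)
      rw [hpPlus]
      exact le_csSup ⟨1, fun q hq => hq.1.2⟩ ⟨hp, hge⟩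
    rw [Set.mem_ofPred_eq, hcdf, ENNReal.ofReal_lt_ofReal_iff_of_nonneg (binomCDF_nonneg hp _)]
    exact hδ
  calc 1 - ENNReal.ofReal δ ≤ 1 - μ {ω | p ≤ pPlus ω}ᶜ :=
        tsub_le_tsub_left ((measure_mono hmiss).trans (measure_cdf_comp_lt_le μ S _)) 1
    _ ≤ μ {ω | p ≤ pPlus ω} := by
        rw [tsub_le_iff_right, ← measure_univ (μ := μ)]
        exact measure_univ_le_add_compl _

/-- Clopper–Pearson upper confidence bound: if `Z_1,...,Z_m` are i.i.d. Bernoulli(p) and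
`S = Z_1 + ... + Z_m`, then with `p⁺ = max{q ∈ [0,1] : F_{m,q}(S) ≥ δ}` we have
`P(p ≤ p⁺) ≥ 1 - δ`. -/
theorem stmt_11 {Ω : Type*} [MeasurableSpace Ω]
    (μ : Measure Ω) [IsProbabilityMeasure μ]
    (m : ℕ) (hm : 1 ≤ m) (p δ : ℝ) (hp : p ∈ Set.Icc (0:ℝ) 1) (hδ : δ ∈ Set.Ioo (0:ℝ) 1)
    (Z : Fin m → Ω → ℕ)
    (hmeas : ∀ i, Measurable (Z i))
    (hval : ∀ i ω, Z i ω ≤ 1)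
    (hbern : ∀ i, μ {ω | Z i ω = 1} = ENNReal.ofReal p)
    (hindep : iIndepFun Z μ)
    (S : Ω → ℕ) (hS : ∀ ω, S ω = ∑ i, Z i ω)
    (pPlus : Ω → ℝ)
    (hpPlus : ∀ ω, pPlus ω = sSup {q | q ∈ Set.Icc (0:ℝ) 1 ∧ δ ≤ binomCDF m q (S ω)}) :
    μ {ω | p ≤ pPlus ω} ≥ 1 - ENNReal.ofReal δ :=
  stmt_11_general μ m p δ hp Z hmeas hval hbern hindep S hS pPlus hpPlus
end

section
/- Monotone sigmoid bound for conservative scores: if |f(x̃)_y - f(x)_y| ≤ L·ε for all x in the ε-ball around x̃, then 1 - sigmoid((f(x̃)_y + L·ε - b)/T) ≤ inf over x in the ball of [1 - sigmoid((f(x)_y - b)/T)], and this bound is at least as tight as the generic Lipschitz bound s(x̃,y) - (L/(4T))·ε. -/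
/-!
Both bounds come from two properties of the sigmoid. It is increasing, so `1 - σ((u - b)/T)` is
antitone in the logit `u`, and on the ball the logit never exceeds `g x̃ + L·ε`; hence the value
there bounds the score from below. Its derivative `σ (1 - σ)` is at most `1/4` (AM-GM), so `σ` is
`1/4`-Lipschitz, and moving the logit up by `a` lowers the score by at most `a/(4T)`.
-/

noncomputable def sigmoid (t : ℝ) : ℝ := 1 / (1 + Real.exp (-t))

theorem Antitone.le_csInf_image {α β : Type*} [Preorder α] [ConditionallyCompleteLattice β]
    {f : α → β} (hf : Antitone f) {s : Set α} (hs : s.Nonempty) {B : α}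
    (hB : B ∈ upperBounds s) : f B ≤ sInf (f '' s) :=
  le_csInf (hs.image f) (by rintro _ ⟨x, hx, rfl⟩; exact hf (hB hx))

theorem sigmoid_eq_real_sigmoid : sigmoid = Real.sigmoid := by
  funext t
  rw [sigmoid, Real.sigmoid_def, one_div]

theorem Real.lipschitzWith_sigmoid : LipschitzWith (1 / 4) Real.sigmoid := by
  refine lipschitzWith_of_nnnorm_deriv_le differentiable_sigmoid fun x => ?_
  rw [Real.deriv_sigmoid, ← NNReal.coe_le_coe, coe_nnnorm, Real.norm_eq_abs,
    abs_of_nonneg (mul_nonneg (Real.sigmoid_nonneg x) (sub_nonneg.2 (Real.sigmoid_le_one x)))]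
  push_cast
  nlinarith [sq_nonneg (Real.sigmoid x - 1 / 2)]

theorem Real.sigmoid_sub_sigmoid_le {u v : ℝ} (h : v ≤ u) :
    Real.sigmoid u - Real.sigmoid v ≤ (u - v) / 4 := by
  have hdist := Real.lipschitzWith_sigmoid.dist_le_mul u v
  rw [Real.dist_eq, Real.dist_eq, abs_of_nonneg (sub_nonneg.2 h)] at hdist
  push_cast at hdist
  linarith [le_abs_self (Real.sigmoid u - Real.sigmoid v)]

theorem stmt_19_general {d : ℕ}
    (X : Set (EuclideanSpace ℝ (Fin d)))
    (T b L ε : ℝ) (hT : 0 < T) (hε : 0 ≤ ε)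
    (g : EuclideanSpace ℝ (Fin d) → ℝ)  -- the selected logit x ↦ f(x)_y
    (xt : EuclideanSpace ℝ (Fin d)) (hxt : xt ∈ X)
    (B : Set (EuclideanSpace ℝ (Fin d)))
    (hB : B = {x | x ∈ X ∧ ‖x - xt‖ ≤ ε})
    (hg : ∀ x ∈ B, |g x - g xt| ≤ L * ε) :
    (1 - sigmoid ((g xt + L * ε - b) / T) ≤
        sInf ((fun x => 1 - sigmoid ((g x - b) / T)) '' B)) ∧
    (∀ t a : ℝ, 0 ≤ a →
        1 - sigmoid ((t + a - b) / T) ≥ (1 - sigmoid ((t - b) / T)) - a / (4 * T)) := by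
  rw [sigmoid_eq_real_sigmoid]
  constructor
  · have hxtB : xt ∈ B := hB ▸ ⟨hxt, by simpa using hε⟩
    have hscore : Antitone fun u => 1 - Real.sigmoid ((u - b) / T) := fun u v huv =>
      sub_le_sub_left (Real.sigmoid_le (by gcongr)) 1
    have hbound : g xt + L * ε ∈ upperBounds (g '' B) := by
      rintro _ ⟨x, hx, rfl⟩
      linarith [(abs_le.mp (hg x hx)).2]
    simpa only [Set.image_image] using
      hscore.le_csInf_image ⟨_, Set.mem_image_of_mem g hxtB⟩ hbound
  · intro t a ha
    have hle : (t - b) / T ≤ (t + a - b) / T := by gcongr; linarith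
    have hstep := Real.sigmoid_sub_sigmoid_le hle
    have hgap : ((t + a - b) / T - (t - b) / T) / 4 = a / (4 * T) := by field_simp; ring
    linarith

/-- Monotone sigmoid bound for conservative scores: (i) if the selected logit
`g x = f(x)_y` varies by at most `L·ε` on the ε-ball around `x̃`, then
`1 - sigmoid((g(x̃) + L·ε - b)/T)` lower-bounds the infimum of the sigmoid LAC score over
the ball; (ii) this monotone bound dominates the generic Lipschitz bound:
`1 - sigmoid((t + a - b)/T) ≥ (1 - sigmoid((t - b)/T)) - a/(4T)` for all `t` and `a ≥ 0`. -/
theorem stmt_19 {d : ℕ}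
    (X : Set (EuclideanSpace ℝ (Fin d)))
    (T b L ε : ℝ) (hT : 0 < T) (hL : 0 ≤ L) (hε : 0 ≤ ε)
    (g : EuclideanSpace ℝ (Fin d) → ℝ)  -- the selected logit x ↦ f(x)_y
    (xt : EuclideanSpace ℝ (Fin d)) (hxt : xt ∈ X)
    (B : Set (EuclideanSpace ℝ (Fin d)))
    (hB : B = {x | x ∈ X ∧ ‖x - xt‖ ≤ ε})
    (hg : ∀ x ∈ B, |g x - g xt| ≤ L * ε) :
    (1 - sigmoid ((g xt + L * ε - b) / T) ≤
        sInf ((fun x => 1 - sigmoid ((g x - b) / T)) '' B)) ∧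
    (∀ t a : ℝ, 0 ≤ a →
        1 - sigmoid ((t + a - b) / T) ≥ (1 - sigmoid ((t - b) / T)) - a / (4 * T)) :=
  stmt_19_general X T b L ε hT hε g xt hxt B hB hg
end
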